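/- arXiv:math/0612473 — 2 statements merged into one kernel-verified Lean document; each statement's English description precedes it below -/
import Mathlib

section
/- Let K be a number field. If there exists an element x ∈ K with x² = −1, then 2 divides the discriminant of K. Equivalently, if the discriminant of K is odd, then K contains no square root of −1 (so ℚ(i) does not embed into K). -/
/-!
A square root `x` of `-1` in `K` is a primitive fourth root of unity, so `ℚ⟮x⟯ ⊆ K` is the fourth
cyclotomic field, of discriminant `-4`. The discriminant of a subfield divides that of `K`
(by the tower formula `|disc K| = N(𝔡_{K/F}) · |disc F| ^ [K : F]`), hence `4 ∣ disc K`.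
-/

open NumberField IntermediateField

theorem IsPrimitiveRoot.of_sq_eq_neg_one {R : Type*} [CommRing R] [NeZero (2 : R)] {x : R}
    (hx : x ^ 2 = -1) : IsPrimitiveRoot x 4 := by
  have hx_ne : ¬x ^ 2 ^ 1 = 1 := fun h ↦
    NeZero.ne (2 : R) (by rw [pow_one, hx] at h; linear_combination -h)
  have hx_four : x ^ 2 ^ (1 + 1) = 1 := by rw [pow_succ, pow_mul, pow_one, hx]; norm_num
  have hord : orderOf x = 4 := orderOf_eq_prime_pow hx_ne hx_four
  exact hord ▸ IsPrimitiveRoot.orderOf x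

theorem IsCyclotomicExtension.Rat.discr_four (K : Type*) [Field K] [CharZero K]
    [IsCyclotomicExtension {4} ℚ K] :
    haveI : NumberField K := IsCyclotomicExtension.numberField {4} ℚ K
    NumberField.discr K = -4 := by
  have : IsCyclotomicExtension {2 ^ (1 + 1)} ℚ K := by norm_num; infer_instance
  rw [IsCyclotomicExtension.Rat.discr_prime_pow_succ 2 1 K]
  norm_num

theorem NumberField.four_dvd_discr_of_isPrimitiveRoot {K : Type*} [Field K] [NumberField K]
    {ζ : K} (hζ : IsPrimitiveRoot ζ 4) : 4 ∣ discr K := by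
  have : IsCyclotomicExtension {4} ℚ ℚ⟮ζ⟯ := by
    have := hζ.intermediateField_adjoin_isCyclotomicExtension ℚ
    -- `discr_four` is stated for the canonical `ℚ`-algebra structure, not the subfield's
    rwa [Subsingleton.elim ℚ⟮ζ⟯.algebra' DivisionRing.toRatAlgebra] at this
  have h := discr_dvd_discr ℚ⟮ζ⟯ K
  rw [IsCyclotomicExtension.Rat.discr_four ℚ⟮ζ⟯] at h
  exact (neg_dvd.mpr dvd_rfl).trans h

/-- If a number field `K` contains a square root of `-1`, then `2` divides the
(absolute) discriminant of `K`. -/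
theorem two_dvd_discr_of_sqrt_neg_one (K : Type*) [Field K] [NumberField K]
    (x : K) (hx : x ^ 2 = -1) : (2 : ℤ) ∣ NumberField.discr K :=
  (by norm_num : (2 : ℤ) ∣ 4).trans (four_dvd_discr_of_isPrimitiveRoot (.of_sq_eq_neg_one hx))
end

section
/- Let K be a number field and θ ∈ 𝓞_K an algebraic integer with K = ℚ(θ). If the reduction modulo 2 of the minimal polynomial of θ over ℤ is squarefree in (ℤ/2ℤ)[X], then there is no element x ∈ K with x² = −1. -/
/-!
Let `R = ℤ[θ] ≅ ℤ[X]/(f)`. Since `R/2R ≅ 𝔽₂[X]/(f mod 2)` is reduced, `2 ∣ a²` implies `2 ∣ a`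
in `R`. If `x² = -1`, some `2ᵏ m x` with `m` odd lies in `R`; as `(2z)² = 2 · 2z²`, the powers
of two can be stripped one at a time, so `u = m x ∈ R`. Then `(m + u)² = 2mu` forces
`m + u = 2c`, whence `4c⁴ = -m⁴`: the odd integer `m⁴` is divisible by `2` in `R`, so `2` is a
unit of `R`, which is impossible since `1/2` is not an algebraic integer.
-/

open Polynomial NumberField

theorem AdjoinRoot.isRadical_map_ker {R S : Type*} [CommRing R] [CommRing S] {φ : R →+* S}
    (hφ : Function.Surjective φ) {f : R[X]} (hf : IsRadical (f.map φ)) :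
    ((RingHom.ker φ).map (of f)).IsRadical := by
  let ψ := mapEquiv (RingHom.quotientKerEquivOfSurjective hφ)
  have hψ : ψ (f.map (Ideal.Quotient.mk _)) = f.map φ := by
    simp only [ψ, mapEquiv_apply, Polynomial.map_map]
    rfl
  let e : AdjoinRoot f ⧸ (RingHom.ker φ).map (of f) ≃+* S[X] ⧸ Ideal.span {f.map φ} :=
    (quotAdjoinRootEquivQuotPolynomialQuot _ f).trans <| Ideal.quotientEquiv _ _ ψ <| by
      rw [Ideal.map_span, Set.image_singleton, RingEquiv.coe_toRingHom, hψ]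
  have := (Ideal.isRadical_iff_quotient_reduced _).mp (isRadical_iff_span_singleton.mp hf)
  rw [Ideal.isRadical_iff_quotient_reduced]
  exact isReduced_of_injective e.toRingHom e.injective

theorem AdjoinRoot.isRadical_natCast_of_squarefree {f : ℤ[X]} {p : ℕ} [Fact p.Prime]
    (hf : Squarefree (f.map (Int.castRingHom (ZMod p)))) : IsRadical (p : AdjoinRoot f) := by
  have h := isRadical_map_ker (ZMod.intCast_surjective (n := p)) hf.isRadical
  rwa [ZMod.ker_intCastRingHom, Ideal.map_span, Set.image_singleton, map_natCast,
    ← isRadical_iff_span_singleton] at h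

theorem IsRadical.map_mulEquiv {M N F : Type*} [Monoid M] [Monoid N] [EquivLike F M N]
    [MulEquivClass F M N] (e : F) {x : M} (hx : IsRadical x) : IsRadical (e x) := by
  intro n y hy
  rw [← EquivLike.apply_inv_apply e y, map_dvd_iff]
  exact hx n _ (by rwa [← map_dvd_iff e, map_pow, EquivLike.apply_inv_apply])

namespace Subalgebra

variable {K : Type*} [Field K] {R : Subalgebra ℤ K}

theorem mem_of_natCast_mul_mem_of_sq_mem {p : ℕ} (hR : IsRadical (p : R)) (hp : (p : K) ≠ 0)
    {z : K} (hpz : p * z ∈ R) (hz : z ^ 2 ∈ R) : z ∈ R := by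
  obtain ⟨c, hc⟩ : (p : R) ∣ ⟨p * z, hpz⟩ :=
    hR 2 _ ⟨p * ⟨z ^ 2, hz⟩, Subtype.ext (by push_cast; ring)⟩
  have hzc : z = c := mul_left_cancel₀ hp (congrArg Subtype.val hc)
  exact hzc ▸ c.2

theorem mem_of_pow_mul_mem_of_sq_mem {p : ℕ} (hR : IsRadical (p : R)) (hp : (p : K) ≠ 0)
    {z : K} (k : ℕ) (hpz : (p : K) ^ k * z ∈ R) (hz : z ^ 2 ∈ R) : z ∈ R := by
  induction k with
  | zero => simpa using hpz
  | succ k ih =>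
    refine ih (mem_of_natCast_mul_mem_of_sq_mem hR hp (by rwa [← mul_assoc, ← pow_succ']) ?_)
    rw [mul_pow, ← pow_mul]
    exact mul_mem (pow_mem (natCast_mem R p) _) hz

theorem isUnit_of_isUnit_intCast [CharZero K] (hR : R ≤ integralClosure ℤ K) {n : ℤ}
    (hn : IsUnit (n : R)) : IsUnit n := by
  obtain ⟨v, hv⟩ := hn.exists_right_inv
  have hnv : (n : K) * v = 1 := by exact_mod_cast congrArg Subtype.val hv
  have hn0 : (n : ℚ) ≠ 0 := by exact_mod_cast left_ne_zero_of_mul_eq_one hnv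
  have hvK : (v : K) = algebraMap ℚ K (n : ℚ)⁻¹ := by
    rw [map_inv₀, map_intCast, eq_inv_of_mul_eq_one_right hnv]
  have hint : IsIntegral ℤ (n : ℚ)⁻¹ :=
    (isIntegral_algebraMap_iff (algebraMap ℚ K).injective).mp (hvK ▸ hR v.2)
  obtain ⟨y, hy⟩ := IsIntegrallyClosed.isIntegral_iff.mp hint
  refine IsUnit.of_mul_eq_one (b := y) ?_
  have : (n : ℚ) * y = 1 := by rw [← eq_intCast (algebraMap ℤ ℚ) y, hy, mul_inv_cancel₀ hn0]
  exact_mod_cast this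

end Subalgebra

theorem sq_ne_neg_sq_of_isRadical_two {A : Type*} [CommRing A] [IsDomain A] [CharZero A]
    (h2 : IsRadical (2 : A)) (h2u : ¬IsUnit (2 : A)) {m : ℤ} (hm : ¬2 ∣ m) (u : A) :
    u ^ 2 ≠ -(m : A) ^ 2 := by
  intro hu
  obtain ⟨c, hc⟩ : (2 : A) ∣ m + u := h2 2 _ ⟨m * u, by linear_combination hu⟩
  have hc2 : 2 * c ^ 2 = m * u :=
    mul_left_cancel₀ two_ne_zero (by linear_combination (-(2 * c + m + u)) * hc + hu)
  have hm4 : (2 : A) ∣ (m : A) ^ 4 :=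
    ⟨-2 * c ^ 4, by linear_combination (2 * c ^ 2 + m * u) * hc2 + m ^ 2 * hu⟩
  obtain ⟨k, hk⟩ : Odd (m ^ 4) := (Int.not_even_iff_odd.mp (by rwa [even_iff_two_dvd])).pow
  refine h2u (isUnit_of_dvd_one ((dvd_add_right (dvd_mul_right 2 (k : A))).mp ?_))
  have hk' : (m : A) ^ 4 = 2 * k + 1 := by exact_mod_cast hk
  rwa [hk'] at hm4

/-- If `K = ℚ(θ)` with `θ` an algebraic integer whose minimal polynomial over `ℤ`
is squarefree modulo `2`, then `K` contains no square root of `-1`. -/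
theorem no_sqrt_neg_one_of_squarefree_minpoly_mod_two
    (K : Type*) [Field K] [NumberField K] (θ : 𝓞 K)
    (hθ : Algebra.adjoin ℚ {(θ : K)} = ⊤)
    (hsf : Squarefree ((minpoly ℤ θ).map (Int.castRingHom (ZMod 2)))) :
    ¬ ∃ x : K, x ^ 2 = -1 := by
  rintro ⟨x, hx⟩
  set R := Algebra.adjoin ℤ {(θ : K)}
  have hθint : IsIntegral ℤ (θ : K) := θ.isIntegral_coe
  have hrad : IsRadical (2 : R) := by
    rw [← minpoly.algebraMap_eq RingOfIntegers.coe_injective θ] at hsf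
    have := (AdjoinRoot.isRadical_natCast_of_squarefree (p := 2) hsf).map_mulEquiv
      (minpoly.equivAdjoin hθint)
    rwa [map_natCast, Nat.cast_ofNat] at this
  have hunit : ¬IsUnit (2 : R) := fun h => by
    have := Subalgebra.isUnit_of_isUnit_intCast (adjoin_le_integralClosure hθint)
      (n := 2) (by exact_mod_cast h)
    simp [Int.isUnit_iff] at this
  obtain ⟨t, ht⟩ := multiple_mem_adjoin_of_mem_localization_adjoin (nonZeroDivisors ℤ) ℚ
    {(θ : K)} x (hθ ▸ Algebra.mem_top)
  obtain ⟨m, ht_eq, hm⟩ := (Int.finiteMultiplicity_iff (a := 2).mpr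
    ⟨by decide, nonZeroDivisors.coe_ne_zero t⟩).exists_eq_pow_mul_and_not_dvd
  have hmx : (m : K) * x ∈ R := by
    refine Subalgebra.mem_of_pow_mul_mem_of_sq_mem hrad two_ne_zero
      (multiplicity 2 (t : ℤ)) ?_ ?_
    · rw [Submonoid.smul_def, zsmul_eq_mul, ht_eq] at ht
      push_cast at ht
      rwa [mul_assoc] at ht
    · rw [mul_pow, hx]
      exact mul_mem (pow_mem (Subalgebra.intCast_mem R m) 2) (neg_mem (one_mem R))
  exact sq_ne_neg_sq_of_isRadical_two hrad hunit hm ⟨_, hmx⟩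
    (Subtype.ext (by push_cast; linear_combination (m : K) ^ 2 * hx))
end
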